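/- arXiv:1502.04000 — 3 statements merged into one kernel-verified Lean document; each statement's English description precedes it below -/
import Mathlib

section
/- Let t > 0, let h_1, …, h_k be step sizes with 0 ≤ h_i ≤ 1 for all i and Σ_{i=1}^k h_i = t, and let (z_j) be the Eulerian scheme z_0 = 0, z_{j+1} = (1 − h_{j+1})·z_j + h_{j+1}·T(z_j). Let f be the solution of the evolution equation ḟ = (T − Id)f with f(0) = 0. Then the normalized quantities satisfy ‖z_k/t − f(t)/t‖ ≤ ‖T(0)‖ / √t. -/
/-!
Let `z`, `w` be Euler schemes for `T` with steps `p i, q i ∈ [0, 1]`. Kobayashi's inequality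
`‖z_j - w_l‖ ≤ ‖T 0‖ √((∑_{i<j} p i - ∑_{i<l} q i)² + ∑_{i<j} p i² + ∑_{i<l} q i²)`
follows by a double induction on `(j, l)`: with `h = p j`, `ε = q l`,
`(h + ε - h ε) (z_{j+1} - w_{l+1})`
`  = ε (1 - h) (z_j - w_{l+1}) + h (1 - ε) (z_{j+1} - w_l) + h ε (T z_j - T w_l)`,
so nonexpansiveness and the concavity of the square root propagate the bound.
The uniform scheme of step `t / m` is `O(1 / m)`-close to the flow at time `t`, its local errors
being quadratic. Comparing `z` with it and letting `m → ∞` gives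
`‖z_k - f t‖ ≤ ‖T 0‖ √(∑ h_i²) ≤ ‖T 0‖ √t`.
-/

open Finset Filter Topology

lemma mul_sqrt_add_mul_sqrt_add_mul_sqrt_le {a b c x y z X : ℝ} (ha : 0 ≤ a) (hb : 0 ≤ b)
    (hc : 0 ≤ c) (hx : 0 ≤ x) (hy : 0 ≤ y) (hz : 0 ≤ z) (hX : 0 ≤ X)
    (h : a * x + b * y + c * z ≤ (a + b + c) * X) :
    a * √x + b * √y + c * √z ≤ (a + b + c) * √X := by
  have cauchySchwarz : ∀ u v w : ℝ,
      (a * u + b * v + c * w) ^ 2 ≤ (a + b + c) * (a * u ^ 2 + b * v ^ 2 + c * w ^ 2) :=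
    fun u v w => by
      nlinarith [mul_nonneg (mul_nonneg ha hb) (sq_nonneg (u - v)),
        mul_nonneg (mul_nonneg ha hc) (sq_nonneg (u - w)),
        mul_nonneg (mul_nonneg hb hc) (sq_nonneg (v - w))]
  refine (pow_le_pow_iff_left₀ (by positivity) (by positivity) two_ne_zero).mp ?_
  calc (a * √x + b * √y + c * √z) ^ 2 ≤ (a + b + c) * (a * x + b * y + c * z) := by
        simpa only [Real.sq_sqrt hx, Real.sq_sqrt hy, Real.sq_sqrt hz] using cauchySchwarz √x √y √z
    _ ≤ (a + b + c) * ((a + b + c) * X) := by gcongr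
    _ = ((a + b + c) * √X) ^ 2 := by rw [mul_pow, Real.sq_sqrt hX]; ring

def kobayashiSq (p q : ℕ → ℝ) (j l : ℕ) : ℝ :=
  (∑ i ∈ range j, p i - ∑ i ∈ range l, q i) ^ 2 + ∑ i ∈ range j, p i ^ 2 + ∑ i ∈ range l, q i ^ 2

lemma kobayashiSq_nonneg (p q : ℕ → ℝ) (j l : ℕ) : 0 ≤ kobayashiSq p q j l := by
  unfold kobayashiSq; positivity

lemma kobayashiSq_succ_succ_ge (p q : ℕ → ℝ) (j l : ℕ) :
    q l * (1 - p j) * kobayashiSq p q j (l + 1) + p j * (1 - q l) * kobayashiSq p q (j + 1) l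
        + p j * q l * kobayashiSq p q j l
      ≤ (p j + q l - p j * q l) * kobayashiSq p q (j + 1) (l + 1) := by
  have hid : q l * (1 - p j) * kobayashiSq p q j (l + 1)
      + p j * (1 - q l) * kobayashiSq p q (j + 1) l + p j * q l * kobayashiSq p q j l
        = (p j + q l - p j * q l) * kobayashiSq p q (j + 1) (l + 1) - 2 * (p j * q l) ^ 2 := by
    simp only [kobayashiSq, sum_range_succ]; ring
  linarith [sq_nonneg (p j * q l)]

section EulerScheme

variable {Z : Type*} [NormedAddCommGroup Z] [NormedSpace ℝ Z] {T : Z → Z}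

noncomputable def eulerStep (T : Z → Z) (h : ℝ) (x : Z) : Z := (1 - h) • x + h • T x

noncomputable def eulerScheme (T : Z → Z) (p : ℕ → ℝ) : ℕ → Z
  | 0 => 0
  | j + 1 => eulerStep T (p j) (eulerScheme T p j)

@[simp]
lemma eulerStep_zero (T : Z → Z) (x : Z) : eulerStep T 0 x = x := by
  simp [eulerStep]

lemma eulerStep_sub_self (T : Z → Z) (h : ℝ) (x : Z) :
    eulerStep T h x - x = h • (T x - x) := by
  simp only [eulerStep]; module

lemma norm_eulerStep_sub_eulerStep_le (hT : LipschitzWith 1 T) {h : ℝ} (hh : h ∈ Set.Icc 0 1)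
    (x y : Z) : ‖eulerStep T h x - eulerStep T h y‖ ≤ ‖x - y‖ := by
  obtain ⟨h0, h1⟩ := hh
  calc ‖eulerStep T h x - eulerStep T h y‖ = ‖(1 - h) • (x - y) + h • (T x - T y)‖ := by
        simp only [eulerStep]; congr 1; module
    _ ≤ (1 - h) * ‖x - y‖ + h * ‖x - y‖ := by
        refine (norm_add_le _ _).trans ?_
        rw [norm_smul_of_nonneg (by linarith), norm_smul_of_nonneg h0]
        gcongr
        simpa using hT.norm_sub_le x y
    _ = ‖x - y‖ := by ring

lemma norm_apply_eulerStep_sub_le (hT : LipschitzWith 1 T) {h : ℝ} (hh : h ∈ Set.Icc 0 1)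
    (x : Z) : ‖T (eulerStep T h x) - eulerStep T h x‖ ≤ ‖T x - x‖ := by
  obtain ⟨h0, h1⟩ := hh
  have hstep := eulerStep_sub_self T h x
  calc ‖T (eulerStep T h x) - eulerStep T h x‖
        = ‖(T (eulerStep T h x) - T x) + (1 - h) • (T x - x)‖ := by
          congr 1; rw [← sub_add_cancel (eulerStep T h x) x, hstep]; module
    _ ≤ ‖eulerStep T h x - x‖ + (1 - h) * ‖T x - x‖ := by
        refine (norm_add_le _ _).trans ?_
        rw [norm_smul_of_nonneg (by linarith)]
        gcongr
        simpa using hT.norm_sub_le _ _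
    _ = ‖T x - x‖ := by rw [hstep, norm_smul_of_nonneg h0]; ring

lemma mul_norm_eulerStep_sub_eulerStep_le (hT : LipschitzWith 1 T) {h ε : ℝ}
    (hh : h ∈ Set.Icc 0 1) (hε : ε ∈ Set.Icc 0 1) (x y : Z) :
    (h + ε - h * ε) * ‖eulerStep T h x - eulerStep T ε y‖ ≤
      ε * (1 - h) * ‖x - eulerStep T ε y‖ + h * (1 - ε) * ‖eulerStep T h x - y‖
        + h * ε * ‖x - y‖ := by
  obtain ⟨h0, h1⟩ := hh
  obtain ⟨ε0, ε1⟩ := hε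
  have ha : 0 ≤ ε * (1 - h) := mul_nonneg ε0 (by linarith)
  have hb : 0 ≤ h * (1 - ε) := mul_nonneg h0 (by linarith)
  have hc : 0 ≤ h * ε := mul_nonneg h0 ε0
  have hD : 0 ≤ h + ε - h * ε := by nlinarith
  have hid : (h + ε - h * ε) • (eulerStep T h x - eulerStep T ε y) =
      (ε * (1 - h)) • (x - eulerStep T ε y) + (h * (1 - ε)) • (eulerStep T h x - y)
        + (h * ε) • (T x - T y) := by
    simp only [eulerStep]; module
  rw [← norm_smul_of_nonneg hD, hid]
  refine (norm_add₃_le).trans ?_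
  rw [norm_smul_of_nonneg ha, norm_smul_of_nonneg hb, norm_smul_of_nonneg hc]
  gcongr
  simpa using hT.norm_sub_le x y

lemma norm_eulerStep_sub_eulerStep_le_mul_sqrt (hT : LipschitzWith 1 T) {h ε K X₁ X₂ X₃ X : ℝ}
    (hh : h ∈ Set.Ioc 0 1) (hε : ε ∈ Set.Icc 0 1) (hK : 0 ≤ K) (hX₁ : 0 ≤ X₁) (hX₂ : 0 ≤ X₂)
    (hX₃ : 0 ≤ X₃) (hX : 0 ≤ X) {x y : Z}
    (h₁ : ‖x - eulerStep T ε y‖ ≤ K * √X₁) (h₂ : ‖eulerStep T h x - y‖ ≤ K * √X₂)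
    (h₃ : ‖x - y‖ ≤ K * √X₃)
    (hXs : ε * (1 - h) * X₁ + h * (1 - ε) * X₂ + h * ε * X₃ ≤ (h + ε - h * ε) * X) :
    ‖eulerStep T h x - eulerStep T ε y‖ ≤ K * √X := by
  obtain ⟨h0, h1⟩ := hh
  obtain ⟨ε0, ε1⟩ := hε
  have ha : 0 ≤ ε * (1 - h) := mul_nonneg ε0 (by linarith)
  have hb : 0 ≤ h * (1 - ε) := mul_nonneg h0.le (by linarith)
  have hc : 0 ≤ h * ε := mul_nonneg h0.le ε0
  have hsum : ε * (1 - h) + h * (1 - ε) + h * ε = h + ε - h * ε := by ring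
  refine le_of_mul_le_mul_left ?_ (show 0 < h + ε - h * ε by nlinarith)
  calc (h + ε - h * ε) * ‖eulerStep T h x - eulerStep T ε y‖
      ≤ ε * (1 - h) * ‖x - eulerStep T ε y‖ + h * (1 - ε) * ‖eulerStep T h x - y‖
          + h * ε * ‖x - y‖ :=
        mul_norm_eulerStep_sub_eulerStep_le hT ⟨h0.le, h1⟩ ⟨ε0, ε1⟩ x y
    _ ≤ ε * (1 - h) * (K * √X₁) + h * (1 - ε) * (K * √X₂) + h * ε * (K * √X₃) := by gcongr
    _ = K * (ε * (1 - h) * √X₁ + h * (1 - ε) * √X₂ + h * ε * √X₃) := by ring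
    _ ≤ K * ((ε * (1 - h) + h * (1 - ε) + h * ε) * √X) := by
        gcongr
        exact mul_sqrt_add_mul_sqrt_add_mul_sqrt_le ha hb hc hX₁ hX₂ hX₃ hX (hsum ▸ hXs)
    _ = (h + ε - h * ε) * (K * √X) := by rw [hsum]; ring

lemma norm_apply_eulerScheme_sub_le (hT : LipschitzWith 1 T) {p : ℕ → ℝ} {j : ℕ}
    (hp : ∀ i < j, p i ∈ Set.Icc 0 1) :
    ‖T (eulerScheme T p j) - eulerScheme T p j‖ ≤ ‖T 0‖ := by
  induction j with
  | zero => simp [eulerScheme]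
  | succ j ih =>
    exact (norm_apply_eulerStep_sub_le hT (hp j j.lt_succ_self) _).trans
      (ih fun i hi => hp i (hi.trans j.lt_succ_self))

lemma norm_eulerScheme_le (hT : LipschitzWith 1 T) {p : ℕ → ℝ} {j : ℕ}
    (hp : ∀ i < j, p i ∈ Set.Icc 0 1) :
    ‖eulerScheme T p j‖ ≤ (∑ i ∈ range j, p i) * ‖T 0‖ := by
  induction j with
  | zero => simp [eulerScheme]
  | succ j ih =>
    have hpj := hp j j.lt_succ_self
    have hp' : ∀ i < j, p i ∈ Set.Icc 0 1 := fun i hi => hp i (hi.trans j.lt_succ_self)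
    calc ‖eulerScheme T p (j + 1)‖
        = ‖eulerScheme T p j + p j • (T (eulerScheme T p j) - eulerScheme T p j)‖ := by
          rw [← eulerStep_sub_self, add_sub_cancel]; rfl
      _ ≤ (∑ i ∈ range j, p i) * ‖T 0‖ + p j * ‖T 0‖ := by
          refine (norm_add_le _ _).trans ?_
          rw [norm_smul_of_nonneg hpj.1]
          gcongr
          exacts [ih hp', hpj.1, norm_apply_eulerScheme_sub_le hT hp']
      _ = (∑ i ∈ range (j + 1), p i) * ‖T 0‖ := by rw [sum_range_succ, add_mul]

lemma norm_eulerScheme_le_mul_sqrt (hT : LipschitzWith 1 T) {p : ℕ → ℝ} {j : ℕ}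
    (hp : ∀ i < j, p i ∈ Set.Icc 0 1) {s : ℝ} (hs : 0 ≤ s) :
    ‖eulerScheme T p j‖ ≤ ‖T 0‖ * √((∑ i ∈ range j, p i) ^ 2 + s) := by
  have hP : 0 ≤ ∑ i ∈ range j, p i := sum_nonneg fun i hi => (hp i (mem_range.mp hi)).1
  calc ‖eulerScheme T p j‖ ≤ (∑ i ∈ range j, p i) * ‖T 0‖ := norm_eulerScheme_le hT hp
    _ ≤ √((∑ i ∈ range j, p i) ^ 2 + s) * ‖T 0‖ := by
        gcongr
        exact (Real.le_sqrt hP (by positivity)).mpr (by linarith)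
    _ = ‖T 0‖ * √((∑ i ∈ range j, p i) ^ 2 + s) := mul_comm _ _

theorem norm_eulerScheme_sub_eulerScheme_le (hT : LipschitzWith 1 T) {p q : ℕ → ℝ} (j l : ℕ)
    (hp : ∀ i < j, p i ∈ Set.Icc 0 1) (hq : ∀ i < l, q i ∈ Set.Icc 0 1) :
    ‖eulerScheme T p j - eulerScheme T q l‖ ≤ ‖T 0‖ * √(kobayashiSq p q j l) := by
  induction j generalizing l with
  | zero =>
    simpa [eulerScheme, kobayashiSq] using
      norm_eulerScheme_le_mul_sqrt hT hq (sum_nonneg fun i _ => sq_nonneg (q i))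
  | succ j ihj =>
    have hp' : ∀ i < j, p i ∈ Set.Icc 0 1 := fun i hi => hp i (hi.trans j.lt_succ_self)
    induction l with
    | zero =>
      simpa [eulerScheme, kobayashiSq] using
        norm_eulerScheme_le_mul_sqrt hT hp (sum_nonneg fun i _ => sq_nonneg (p i))
    | succ l ihl =>
      have hq' : ∀ i < l, q i ∈ Set.Icc 0 1 := fun i hi => hq i (hi.trans l.lt_succ_self)
      obtain ⟨hpj0, hpj1⟩ := hp j j.lt_succ_self
      rcases hpj0.eq_or_lt with hpj | hpj
      · have hK : kobayashiSq p q (j + 1) (l + 1) = kobayashiSq p q j (l + 1) := by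
          simp [kobayashiSq, sum_range_succ, ← hpj]
        simpa [eulerScheme, hK, ← hpj] using ihj (l + 1) hp' hq
      · exact norm_eulerStep_sub_eulerStep_le_mul_sqrt hT ⟨hpj, hpj1⟩ (hq l l.lt_succ_self)
          (norm_nonneg _) (kobayashiSq_nonneg ..) (kobayashiSq_nonneg ..) (kobayashiSq_nonneg ..)
          (kobayashiSq_nonneg ..) (ihj (l + 1) hp' hq) (ihl hq') (ihj l hp' hq')
          (kobayashiSq_succ_succ_ge p q j l)

lemma norm_flow_sub_le {f : ℝ → Z} (hf : ∀ s, 0 ≤ s → HasDerivAt f (T (f s) - f s) s)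
    {t M : ℝ} (hM : ∀ s ∈ Set.Icc 0 t, ‖T (f s) - f s‖ ≤ M) {s r : ℝ} (hs : 0 ≤ s) (hsr : s ≤ r)
    (hr : r ≤ t) : ‖f r - f s‖ ≤ M * (r - s) :=
  norm_image_sub_le_of_norm_deriv_le_segment' (fun x hx => (hf x (hs.trans hx.1)).hasDerivWithinAt)
    (fun x hx => hM x ⟨hs.trans hx.1, hx.2.le.trans hr⟩) r ⟨hsr, le_rfl⟩

lemma norm_flow_sub_eulerStep_le (hT : LipschitzWith 1 T) {f : ℝ → Z}
    (hf : ∀ s, 0 ≤ s → HasDerivAt f (T (f s) - f s) s)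
    {t M : ℝ} (hM : ∀ s ∈ Set.Icc 0 t, ‖T (f s) - f s‖ ≤ M) {s δ : ℝ} (hs : 0 ≤ s) (hδ : 0 ≤ δ)
    (hsδ : s + δ ≤ t) : ‖f (s + δ) - eulerStep T δ (f s)‖ ≤ 2 * M * δ ^ 2 := by
  set v := T (f s) - f s
  have hM0 : 0 ≤ M := (norm_nonneg _).trans (hM s ⟨hs, by linarith⟩)
  have hderiv : ∀ r ∈ Set.Icc s (s + δ),
      HasDerivWithinAt (fun r => f r - (r - s) • v) (T (f r) - f r - v) (Set.Icc s (s + δ)) r := by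
    intro r hr
    exact ((hf r (hs.trans hr.1)).sub
      (((hasDerivAt_id r).sub_const s).smul_const v)).hasDerivWithinAt.congr_deriv (by simp)
  have hbound : ∀ r ∈ Set.Ico s (s + δ), ‖T (f r) - f r - v‖ ≤ 2 * M * δ := by
    intro r hr
    have hfr := norm_flow_sub_le hf hM hs hr.1 (by linarith [hr.2])
    calc ‖T (f r) - f r - v‖ = ‖(T (f r) - T (f s)) - (f r - f s)‖ := by
          congr 1; simp only [v]; abel
      _ ≤ ‖f r - f s‖ + ‖f r - f s‖ := by
          refine (norm_sub_le _ _).trans ?_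
          gcongr
          simpa using hT.norm_sub_le (f r) (f s)
      _ ≤ 2 * M * δ := by nlinarith [hr.2]
  have := norm_image_sub_le_of_norm_deriv_le_segment' hderiv hbound (s + δ) ⟨by linarith, le_rfl⟩
  calc ‖f (s + δ) - eulerStep T δ (f s)‖
      = ‖(f (s + δ) - (s + δ - s) • v) - (f s - (s - s) • v)‖ := by
        rw [← sub_add_cancel (eulerStep T δ (f s)) (f s), eulerStep_sub_self]
        congr 1; simp only [add_sub_cancel_left, sub_self, zero_smul, sub_zero]; abel
    _ ≤ 2 * M * δ * (s + δ - s) := this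
    _ = 2 * M * δ ^ 2 := by ring

lemma norm_eulerScheme_const_sub_flow_le (hT : LipschitzWith 1 T) {f : ℝ → Z} (hf0 : f 0 = 0)
    (hf : ∀ s, 0 ≤ s → HasDerivAt f (T (f s) - f s) s)
    {t M : ℝ} (hM : ∀ s ∈ Set.Icc 0 t, ‖T (f s) - f s‖ ≤ M) {δ : ℝ} (hδ : δ ∈ Set.Icc 0 1)
    {j : ℕ} (hj : j * δ ≤ t) :
    ‖eulerScheme T (fun _ => δ) j - f (j * δ)‖ ≤ j * (2 * M * δ ^ 2) := by
  induction j with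
  | zero => simp [eulerScheme, hf0]
  | succ j ih =>
    push_cast at hj ⊢
    have hjδ : 0 ≤ j * δ := mul_nonneg j.cast_nonneg hδ.1
    calc ‖eulerScheme T (fun _ => δ) (j + 1) - f ((j + 1) * δ)‖
        ≤ ‖eulerStep T δ (eulerScheme T (fun _ => δ) j) - eulerStep T δ (f (j * δ))‖
            + ‖f (j * δ + δ) - eulerStep T δ (f (j * δ))‖ := by
          rw [add_mul, one_mul, ← norm_neg (f _ - _), neg_sub]
          exact norm_sub_le_norm_sub_add_norm_sub _ _ _
      _ ≤ j * (2 * M * δ ^ 2) + 2 * M * δ ^ 2 := by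
          gcongr
          · exact (norm_eulerStep_sub_eulerStep_le hT hδ _ _).trans (ih (by linarith [hδ.1]))
          · exact norm_flow_sub_eulerStep_le hT hf hM hjδ hδ.1 (by linarith)
      _ = (j + 1) * (2 * M * δ ^ 2) := by ring

theorem norm_eulerScheme_sub_flow_le (hT : LipschitzWith 1 T) {f : ℝ → Z} (hf0 : f 0 = 0)
    (hf : ∀ s, 0 ≤ s → HasDerivAt f (T (f s) - f s) s) {p : ℕ → ℝ} {k : ℕ}
    (hp : ∀ i < k, p i ∈ Set.Icc 0 1) {t : ℝ} (ht : 0 ≤ t) (hpt : ∑ i ∈ range k, p i = t) :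
    ‖eulerScheme T p k - f t‖ ≤ ‖T 0‖ * √(∑ i ∈ range k, p i ^ 2) := by
  set S := ∑ i ∈ range k, p i ^ 2
  obtain ⟨M, hM⟩ := isCompact_Icc.exists_bound_of_continuousOn (s := Set.Icc 0 t)
    (f := fun s => T (f s) - f s) <| by
      have hfc : ContinuousOn f (Set.Icc 0 t) := fun s hs =>
        (hf s hs.1).continuousAt.continuousWithinAt
      exact (hT.continuous.comp_continuousOn hfc).sub hfc
  have hbound : ∀ᶠ m : ℕ in atTop,
      ‖eulerScheme T p k - f t‖ ≤ ‖T 0‖ * √(S + t * (t / m)) + 2 * M * t * (t / m) := by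
    filter_upwards [tendsto_natCast_atTop_atTop.eventually_ge_atTop t, eventually_gt_atTop 0]
      with m htm hm
    have hm' : (0 : ℝ) < m := Nat.cast_pos.mpr hm
    set δ := t / m
    have hδ : δ ∈ Set.Icc 0 1 := ⟨by positivity, div_le_one_of_le₀ htm hm'.le⟩
    have hmδ : m * δ = t := mul_div_cancel₀ t hm'.ne'
    have hK : kobayashiSq p (fun _ => δ) k m = S + t * δ := by
      simp only [kobayashiSq, sum_const, card_range, nsmul_eq_mul, hpt, hmδ]; rw [← hmδ]; ring
    calc ‖eulerScheme T p k - f t‖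
        ≤ ‖eulerScheme T p k - eulerScheme T (fun _ => δ) m‖
            + ‖eulerScheme T (fun _ => δ) m - f (m * δ)‖ := by
          rw [hmδ]; exact norm_sub_le_norm_sub_add_norm_sub _ _ _
      _ ≤ ‖T 0‖ * √(S + t * δ) + m * (2 * M * δ ^ 2) := by
          gcongr
          · exact hK ▸ norm_eulerScheme_sub_eulerScheme_le hT k m hp fun _ _ => hδ
          · exact norm_eulerScheme_const_sub_flow_le hT hf0 hf hM hδ hmδ.le
      _ = ‖T 0‖ * √(S + t * δ) + 2 * M * t * δ := by rw [← hmδ]; ring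
  have hlim : Tendsto (fun m : ℕ => ‖T 0‖ * √(S + t * (t / m)) + 2 * M * t * (t / m)) atTop
      (𝓝 (‖T 0‖ * √S)) := by
    have hcont : Continuous fun δ : ℝ => ‖T 0‖ * √(S + t * δ) + 2 * M * t * δ := by fun_prop
    simpa [Function.comp_def] using (hcont.tendsto 0).comp (tendsto_const_div_atTop_nhds_zero_nat t)
  exact ge_of_tendsto hlim hbound

end EulerScheme

theorem eulerian_scheme_normalized_bound_general
    {Z : Type*} [NormedAddCommGroup Z] [NormedSpace ℝ Z]
    (T : Z → Z) (hT : ∀ x y : Z, ‖T x - T y‖ ≤ ‖x - y‖)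
    (t : ℝ) (ht : 0 < t)
    (k : ℕ) (hs : ℕ → ℝ)
    (hbound : ∀ i ∈ Finset.Icc 1 k, 0 ≤ hs i ∧ hs i ≤ 1)
    (hsum : ∑ i ∈ Finset.Icc 1 k, hs i = t)
    (zs : ℕ → Z) (hz0 : zs 0 = 0)
    (hz : ∀ j, zs (j + 1) = (1 - hs (j + 1)) • zs j + hs (j + 1) • T (zs j))
    (f : ℝ → Z) (hf0 : f 0 = 0)
    (hf : ∀ s : ℝ, 0 ≤ s → HasDerivAt f (T (f s) - f s) s) :
    ‖(1 / t) • zs k - (1 / t) • f t‖ ≤ ‖T 0‖ / Real.sqrt t := by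
  have hLip : LipschitzWith 1 T := LipschitzWith.of_dist_le_mul fun x y => by
    simpa [dist_eq_norm] using hT x y
  have hzs : zs = eulerScheme T (fun i => hs (i + 1)) := by
    funext j
    induction j with
    | zero => exact hz0
    | succ j ih => rw [hz, ih]; rfl
  have hp : ∀ i < k, hs (i + 1) ∈ Set.Icc 0 1 := fun i hi =>
    hbound (i + 1) (by simp only [mem_Icc]; omega)
  have hpt : ∑ i ∈ range k, hs (i + 1) = t := by
    rw [← hsum, ← Ico_add_one_right_eq_Icc, sum_Ico_eq_sum_range]; simp [add_comm]
  have hS : ∑ i ∈ range k, hs (i + 1) ^ 2 ≤ t := hpt ▸ sum_le_sum fun i hi => by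
    obtain ⟨h0, h1⟩ := hp i (mem_range.mp hi); nlinarith
  have hk : ‖zs k - f t‖ ≤ ‖T 0‖ * √t := by
    rw [hzs]
    exact (norm_eulerScheme_sub_flow_le hLip hf0 hf hp ht.le hpt).trans (by gcongr)
  calc ‖(1 / t) • zs k - (1 / t) • f t‖ = ‖zs k - f t‖ / t := by
        rw [← smul_sub, norm_smul_of_nonneg (by positivity)]; ring
    _ ≤ ‖T 0‖ * √t / t := by gcongr
    _ = ‖T 0‖ / √t := by field_simp; rw [Real.sq_sqrt ht.le]

/-- Asymptotic comparison: for step sizes `h_i ∈ [0,1]` summing to `t > 0`,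
the normalized Eulerian scheme started at `0` satisfies
`‖z_k/t - f t / t‖ ≤ ‖T 0‖ / √t` where `f` solves `ḟ = (T - Id) f`, `f 0 = 0`. -/
theorem eulerian_scheme_normalized_bound
    {Z : Type*} [NormedAddCommGroup Z] [NormedSpace ℝ Z] [CompleteSpace Z]
    (T : Z → Z) (hT : ∀ x y : Z, ‖T x - T y‖ ≤ ‖x - y‖)
    (t : ℝ) (ht : 0 < t)
    (k : ℕ) (hs : ℕ → ℝ)
    (hbound : ∀ i ∈ Finset.Icc 1 k, 0 ≤ hs i ∧ hs i ≤ 1)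
    (hsum : ∑ i ∈ Finset.Icc 1 k, hs i = t)
    (zs : ℕ → Z) (hz0 : zs 0 = 0)
    (hz : ∀ j, zs (j + 1) = (1 - hs (j + 1)) • zs j + hs (j + 1) • T (zs j))
    (f : ℝ → Z) (hf0 : f 0 = 0)
    (hf : ∀ s : ℝ, 0 ≤ s → HasDerivAt f (T (f s) - f s) s) :
    ‖(1 / t) • zs k - (1 / t) • f t‖ ≤ ‖T 0‖ / Real.sqrt t :=
  eulerian_scheme_normalized_bound_general T hT t ht k hs hbound hsum zs hz0 hz f hf0 hf
end

section
/- Assume T satisfies assumption (H) with functions k and ℓ. Then for all λ, h ∈ (0,1], ‖D_λ^h(w_λ) − w_λ‖ ≤ 2·h·ℓ(‖T(0)‖)·k(λ²). -/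
/-!
Put `d = 1 + λ - λh` and `μ = λ / d`. Since `((1 - μ) / μ) = ((1 - λh) / λ)`, the relaxed
operator is the affine combination `D_λ^h = (1 - hd) Id + hd D_μ^1`, while `w_λ` is a fixed point
of `D_λ^1`. Hence `D_λ^h(w_λ) - w_λ = hd (D_μ^1(w_λ) - D_λ^1(w_λ))`, which (H) bounds by
`2h k(λ - μ) ℓ(‖w_λ‖)`; finally `λ - μ = λ²(1 - h)/d ≤ λ²` and `‖w_λ‖ ≤ ‖T 0‖`.
-/

open Set

section DiscountedOperator

variable {Z : Type*} [NormedAddCommGroup Z] [NormedSpace ℝ Z] (T : Z → Z)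

/-- The paper's `D_λ^1`. -/
noncomputable def discountedOp (lam : ℝ) (x : Z) : Z :=
  lam • T (((1 - lam) / lam) • x)

/-- The paper's `D_λ^h`. -/
noncomputable def relaxedDiscountedOp (lam h : ℝ) (x : Z) : Z :=
  lam • ((1 - h) • (((1 - lam * h) / lam) • x) + h • T (((1 - lam * h) / lam) • x))

variable {T}

theorem discountedOp_smul_of_fixed {lam : ℝ} (hlam : lam ≠ 0) {W : Z}
    (hW : T ((1 - lam) • W) = W) : discountedOp T lam (lam • W) = lam • W := by
  rw [discountedOp, smul_smul, div_mul_cancel₀ _ hlam, hW]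

theorem norm_smul_le_of_fixed (hT : ∀ x y : Z, ‖T x - T y‖ ≤ ‖x - y‖) {lam : ℝ}
    (hlam : lam ∈ Ioc (0 : ℝ) 1) {W : Z} (hW : T ((1 - lam) • W) = W) :
    ‖lam • W‖ ≤ ‖T 0‖ := by
  have hW_le : ‖W‖ ≤ (1 - lam) * ‖W‖ + ‖T 0‖ :=
    calc ‖W‖ = ‖(T ((1 - lam) • W) - T 0) + T 0‖ := by rw [sub_add_cancel, hW]
      _ ≤ ‖(1 - lam) • W - 0‖ + ‖T 0‖ := (norm_add_le _ _).trans (by gcongr; exact hT _ _)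
      _ = (1 - lam) * ‖W‖ + ‖T 0‖ := by
        rw [sub_zero, norm_smul, Real.norm_of_nonneg (by linarith [hlam.2])]
  rw [norm_smul, Real.norm_of_nonneg hlam.1.le]
  linarith

theorem relaxedDiscountedOp_sub_self {lam h : ℝ} (hlam : lam ≠ 0)
    (hd : 1 + lam - lam * h ≠ 0) (x : Z) :
    relaxedDiscountedOp T lam h x - x =
      (h * (1 + lam - lam * h)) • (discountedOp T (lam / (1 + lam - lam * h)) x - x) := by
  have hratio : (1 - lam / (1 + lam - lam * h)) / (lam / (1 + lam - lam * h))
      = (1 - lam * h) / lam := by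
    field_simp
    ring
  rw [relaxedDiscountedOp, discountedOp, hratio]
  match_scalars
  · field_simp
    ring
  · field_simp

theorem norm_discountedOp_sub_smul_le (hT : ∀ x y : Z, ‖T x - T y‖ ≤ ‖x - y‖)
    {kf lf : ℝ → ℝ} (hk0 : ∀ x ∈ Ioc (0 : ℝ) 1, 0 ≤ kf x) (hkmono : MonotoneOn kf (Ioc 0 1))
    (hl0 : ∀ x : ℝ, 0 ≤ x → 0 ≤ lf x) (hlmono : MonotoneOn lf (Ici 0))
    (hH : ∀ lam mu : ℝ, lam ∈ Ioc (0 : ℝ) 1 → mu ∈ Ioc (0 : ℝ) 1 →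
      ∀ x : Z, ‖discountedOp T lam x - discountedOp T mu x‖ ≤ kf |lam - mu| * lf ‖x‖)
    {lam mu : ℝ} (hlam : lam ∈ Ioc (0 : ℝ) 1) (hmu : 0 < mu) (hmu_le : mu ≤ lam)
    (hgap : lam - mu ≤ lam ^ 2) {W : Z} (hW : T ((1 - lam) • W) = W) :
    ‖discountedOp T mu (lam • W) - lam • W‖ ≤ kf (lam ^ 2) * lf ‖T 0‖ := by
  have hlam2 : lam ^ 2 ∈ Ioc (0 : ℝ) 1 := ⟨by positivity [hlam.1], pow_le_one₀ hlam.1.le hlam.2⟩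
  have hkl : 0 ≤ kf (lam ^ 2) := hk0 _ hlam2
  have hfixed := discountedOp_smul_of_fixed hlam.1.ne' hW
  -- (H) says nothing useful at `μ = λ`, as `kf 0` is unconstrained.
  rcases hmu_le.eq_or_lt with rfl | hlt
  · rw [hfixed, sub_self, norm_zero]
    exact mul_nonneg hkl (hl0 _ (norm_nonneg _))
  have hgap_mem : lam - mu ∈ Ioc (0 : ℝ) 1 := ⟨sub_pos.2 hlt, hgap.trans hlam2.2⟩
  have hw := norm_smul_le_of_fixed hT hlam hW
  calc ‖discountedOp T mu (lam • W) - lam • W‖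
      = ‖discountedOp T lam (lam • W) - discountedOp T mu (lam • W)‖ := by
        rw [norm_sub_rev, hfixed]
    _ ≤ kf (lam - mu) * lf ‖lam • W‖ := by
        simpa only [abs_of_pos hgap_mem.1] using
          hH lam mu hlam ⟨hmu, hmu_le.trans hlam.2⟩ (lam • W)
    _ ≤ kf (lam ^ 2) * lf ‖T 0‖ :=
        mul_le_mul (hkmono hgap_mem hlam2 hgap) (hlmono (norm_nonneg _) (norm_nonneg _) hw)
          (hl0 _ (norm_nonneg _)) hkl

end DiscountedOperator

theorem assumption_H_single_step_general
    {Z : Type*} [NormedAddCommGroup Z] [NormedSpace ℝ Z]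
    (T : Z → Z) (hT : ∀ x y : Z, ‖T x - T y‖ ≤ ‖x - y‖)
    (kf lf : ℝ → ℝ)
    (hk0 : ∀ x ∈ Set.Ioc (0 : ℝ) 1, 0 ≤ kf x)
    (hkmono : MonotoneOn kf (Set.Ioc (0 : ℝ) 1))
    (hl0 : ∀ x : ℝ, 0 ≤ x → 0 ≤ lf x)
    (hlmono : MonotoneOn lf (Set.Ici (0 : ℝ)))
    (hH : ∀ lam mu : ℝ, lam ∈ Set.Ioc (0 : ℝ) 1 → mu ∈ Set.Ioc (0 : ℝ) 1 →
      ∀ x : Z, ‖lam • T (((1 - lam) / lam) • x) - mu • T (((1 - mu) / mu) • x)‖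
        ≤ kf |lam - mu| * lf ‖x‖)
    (lam h : ℝ) (hlam : lam ∈ Set.Ioc (0 : ℝ) 1) (hh : h ∈ Set.Ioc (0 : ℝ) 1)
    (Wl : Z) (hWl : T ((1 - lam) • Wl) = Wl) :
    ‖lam • ((1 - h) • (((1 - lam * h) / lam) • (lam • Wl))
        + h • T (((1 - lam * h) / lam) • (lam • Wl)))
      - lam • Wl‖ ≤ 2 * h * lf ‖T 0‖ * kf (lam ^ 2) := by
  obtain ⟨hl, hl1⟩ := hlam
  obtain ⟨hh0, hh1⟩ := hh
  set d := 1 + lam - lam * h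
  have hd1 : 1 ≤ d := by nlinarith
  have hd2 : d ≤ 2 := by nlinarith
  have hmu_le : lam / d ≤ lam := div_le_self hl.le hd1
  have hgap : lam - lam / d ≤ lam ^ 2 := by
    have : (lam - lam ^ 2) * d ≤ lam := by nlinarith [mul_nonneg hl.le (sub_nonneg.2 hl1)]
    linarith [(le_div_iff₀ (by linarith : (0 : ℝ) < d)).2 this]
  change ‖relaxedDiscountedOp T lam h (lam • Wl) - lam • Wl‖ ≤ _
  rw [relaxedDiscountedOp_sub_self hl.ne' (by positivity), norm_smul,
    Real.norm_of_nonneg (by positivity)]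
  calc h * d * ‖discountedOp T (lam / d) (lam • Wl) - lam • Wl‖
      ≤ (2 * h) * (kf (lam ^ 2) * lf ‖T 0‖) :=
        mul_le_mul (by nlinarith)
          (norm_discountedOp_sub_smul_le hT hk0 hkmono hl0 hlmono hH ⟨hl, hl1⟩
            (div_pos hl (by positivity)) hmu_le hgap hWl)
          (norm_nonneg _) (by positivity)
    _ = 2 * h * lf ‖T 0‖ * kf (lam ^ 2) := by ring

/-- Under assumption (H) — there are nondecreasing `k : (0,1] → ℝ⁺` and
`ℓ : [0,∞) → ℝ⁺` with `k(λ) = o(√λ)` at `0` and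
`‖D_λ^1 x - D_μ^1 x‖ ≤ k(|λ-μ|) ℓ(‖x‖)` where `D_λ^1 x = λ • T(((1-λ)/λ) • x)` —
one has `‖D_λ^h(w_λ) - w_λ‖ ≤ 2 h ℓ(‖T 0‖) k(λ²)` for all `λ, h ∈ (0,1]`,
where `w_λ = λ • W_λ` with `W_λ` the fixed point of `x ↦ T((1-λ) x)`, and
`D_λ^h(x) = λ • T_h(((1-λh)/λ) • x)` with `T_h = (1-h) Id + h T`. -/
theorem assumption_H_single_step
    {Z : Type*} [NormedAddCommGroup Z] [NormedSpace ℝ Z] [CompleteSpace Z]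
    (T : Z → Z) (hT : ∀ x y : Z, ‖T x - T y‖ ≤ ‖x - y‖)
    (kf lf : ℝ → ℝ)
    (hk0 : ∀ x ∈ Set.Ioc (0 : ℝ) 1, 0 ≤ kf x)
    (hkmono : MonotoneOn kf (Set.Ioc (0 : ℝ) 1))
    (hl0 : ∀ x : ℝ, 0 ≤ x → 0 ≤ lf x)
    (hlmono : MonotoneOn lf (Set.Ici (0 : ℝ)))
    (hksmall : Filter.Tendsto (fun x : ℝ => kf x / Real.sqrt x)
      (nhdsWithin 0 (Set.Ioi 0)) (nhds 0))
    (hH : ∀ lam mu : ℝ, lam ∈ Set.Ioc (0 : ℝ) 1 → mu ∈ Set.Ioc (0 : ℝ) 1 →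
      ∀ x : Z, ‖lam • T (((1 - lam) / lam) • x) - mu • T (((1 - mu) / mu) • x)‖
        ≤ kf |lam - mu| * lf ‖x‖)
    (lam h : ℝ) (hlam : lam ∈ Set.Ioc (0 : ℝ) 1) (hh : h ∈ Set.Ioc (0 : ℝ) 1)
    (Wl : Z) (hWl : T ((1 - lam) • Wl) = Wl) :
    ‖lam • ((1 - h) • (((1 - lam * h) / lam) • (lam • Wl))
        + h • T (((1 - lam * h) / lam) • (lam • Wl)))
      - lam • Wl‖ ≤ 2 * h * lf ‖T 0‖ * kf (lam ^ 2) :=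
  assumption_H_single_step_general T hT kf lf hk0 hkmono hl0 hlmono hH lam h hlam hh Wl hWl
end

section
/- Assume T satisfies assumption (H) with functions k and ℓ. Then for every λ ∈ (0,1], every n, and every finite sequence h_1, …, h_n in (0,1]: ‖(D_λ^{h_1} ∘ D_λ^{h_2} ∘ ⋯ ∘ D_λ^{h_n})(w_λ) − w_λ‖ ≤ 2·ℓ(‖T(0)‖)·k(λ²)/λ. Consequently, this bound tends to 0 as λ → 0. -/
/-!
`w_λ = λ W_λ` is a fixed point of `D_λ^1` with `‖w_λ‖ ≤ ‖T 0‖`. Each `D_λ^h` is a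
`(1 - λh)`-contraction, and with `d = 1 + λ(1 - h)`, `μ = λ/d` one has
`D_λ^h - Id = hd (D_μ^1 - Id)`, so (H) gives `‖D_λ^h w_λ - w_λ‖ ≤ λh · C` for
`C = 2 ℓ(‖T 0‖) k(λ²)/λ`, because `0 < λ - μ ≤ λ²`. A `(1 - a)`-contraction moving the centre of a
ball of radius `C` by at most `aC` maps that ball into itself, so every composition of the
`D_λ^{h_i}` keeps `w_λ` within `C` of itself. The limit is `k(x)/√x → 0` along `x = λ²`.
-/

open Set Filter Topology Metric

theorem List.foldr_mem_of_mapsTo {α β : Type*} {s : Set α} {f : β → α → α} {l : List β}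
    (hf : ∀ b ∈ l, MapsTo (f b) s s) {x : α} (hx : x ∈ s) : l.foldr f x ∈ s := by
  induction l with
  | nil => exact hx
  | cons b l ih =>
    exact hf b List.mem_cons_self (ih fun b hb => hf b (List.mem_cons_of_mem _ hb))

theorem mapsTo_closedBall_of_dist_le {X : Type*} [PseudoMetricSpace X] {f : X → X} {a C : ℝ}
    {w : X} (ha : a ≤ 1) (hf : ∀ x y, dist (f x) (f y) ≤ (1 - a) * dist x y)
    (hw : dist (f w) w ≤ a * C) : MapsTo f (closedBall w C) (closedBall w C) := fun x hx =>
  calc dist (f x) w ≤ dist (f x) (f w) + dist (f w) w := dist_triangle _ _ _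
    _ ≤ (1 - a) * C + a * C :=
        add_le_add ((hf x w).trans (mul_le_mul_of_nonneg_left hx (sub_nonneg.2 ha))) hw
    _ = C := by ring

theorem tendsto_const_mul_comp_sq_div {k : ℝ → ℝ}
    (hk : Tendsto (fun x => k x / √x) (𝓝[>] 0) (𝓝 0)) (c : ℝ) :
    Tendsto (fun l => c * k (l ^ 2) / l) (𝓝[>] 0) (𝓝 0) := by
  have hsq : Tendsto (fun l : ℝ => l ^ 2) (𝓝[>] 0) (𝓝[>] 0) :=
    tendsto_nhdsWithin_of_tendsto_nhds_of_eventually_within _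
      ((continuous_pow 2).tendsto' 0 0 (zero_pow two_ne_zero) |>.mono_left nhdsWithin_le_nhds)
      (eventually_nhdsWithin_of_forall fun l (hl : 0 < l) => pow_pos hl 2)
  have := (hk.comp hsq).const_mul c
  rw [mul_zero] at this
  refine this.congr' (eventually_nhdsWithin_of_forall fun l (hl : 0 < l) => ?_)
  simp [Real.sqrt_sq hl.le, mul_div_assoc]

noncomputable section

variable {E : Type*} [NormedAddCommGroup E] [NormedSpace ℝ E]

/-- The paper's `T_h`. -/
def averagedMap (T : E → E) (h : ℝ) (x : E) : E := (1 - h) • x + h • T x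

/-- The paper's `D_λ^h`. -/
def scaledAveragedMap (T : E → E) (lam h : ℝ) (x : E) : E :=
  lam • averagedMap T h (((1 - lam * h) / lam) • x)

/-- The paper's `D_λ^1`, written as in assumption (H) rather than as `D_λ^h` at `h = 1`. -/
def scaledMap (T : E → E) (lam : ℝ) (x : E) : E := lam • T (((1 - lam) / lam) • x)

/-- The Lipschitz-in-`λ` part of assumption (H). -/
def AssumptionH (T : E → E) (kf lf : ℝ → ℝ) : Prop :=
  ∀ lam mu : ℝ, lam ∈ Ioc (0 : ℝ) 1 → mu ∈ Ioc (0 : ℝ) 1 →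
    ∀ x : E, ‖scaledMap T lam x - scaledMap T mu x‖ ≤ kf |lam - mu| * lf ‖x‖

variable {T : E → E} {lam h : ℝ}

theorem norm_smul_le_of_map_smul_eq (hT : ∀ x y, ‖T x - T y‖ ≤ ‖x - y‖) (hlam0 : 0 ≤ lam)
    (hlam1 : lam ≤ 1) {W : E} (hW : T ((1 - lam) • W) = W) : ‖lam • W‖ ≤ ‖T 0‖ := by
  have hcontr : ‖W - T 0‖ ≤ (1 - lam) * ‖W‖ := by
    simpa [hW, norm_smul, abs_of_nonneg (sub_nonneg.2 hlam1)] using hT ((1 - lam) • W) 0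
  rw [norm_smul, Real.norm_of_nonneg hlam0]
  linarith [norm_sub_norm_le W (T 0)]

theorem scaledMap_smul_eq (hlam : lam ≠ 0) {W : E} (hW : T ((1 - lam) • W) = W) :
    scaledMap T lam (lam • W) = lam • W := by
  rw [scaledMap, smul_smul, div_mul_cancel₀ _ hlam, hW]

theorem dist_scaledAveragedMap_le (hT : ∀ x y, ‖T x - T y‖ ≤ ‖x - y‖) (hlam0 : 0 < lam)
    (hlam1 : lam ≤ 1) (hh0 : 0 ≤ h) (hh1 : h ≤ 1) (x y : E) :
    dist (scaledAveragedMap T lam h x) (scaledAveragedMap T lam h y)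
      ≤ (1 - lam * h) * dist x y := by
  set c := (1 - lam * h) / lam
  have hlh : 0 ≤ 1 - lam * h := by nlinarith
  have hc : 0 ≤ c := div_nonneg hlh hlam0.le
  have hdecomp : scaledAveragedMap T lam h x - scaledAveragedMap T lam h y
      = ((1 - h) * (1 - lam * h)) • (x - y) + (lam * h) • (T (c • x) - T (c • y)) := by
    simp only [scaledAveragedMap, averagedMap, c]
    match_scalars <;> field_simp
  rw [dist_eq_norm, dist_eq_norm, hdecomp]
  calc _ ≤ (1 - h) * (1 - lam * h) * ‖x - y‖ + lam * h * ‖T (c • x) - T (c • y)‖ := by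
        refine (norm_add_le _ _).trans_eq ?_
        rw [norm_smul, norm_smul, Real.norm_of_nonneg (mul_nonneg (sub_nonneg.2 hh1) hlh),
          Real.norm_of_nonneg (by positivity)]
    _ ≤ (1 - h) * (1 - lam * h) * ‖x - y‖ + lam * h * (c * ‖x - y‖) := by
        gcongr
        simpa [← smul_sub, norm_smul, abs_of_nonneg hc] using hT (c • x) (c • y)
    _ = (1 - lam * h) * ‖x - y‖ := by simp only [c]; field_simp; ring

/-- `D_λ^h` is an affine combination of `Id` and `D_μ^1` with `μ = λ / (1 + λ(1 - h))`: both
evaluate `T` at the same point since `(1 - μ)/μ = (1 - λh)/λ`. -/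
theorem scaledAveragedMap_sub_self (hlam : lam ≠ 0) (hd : 1 + lam * (1 - h) ≠ 0) (x : E) :
    scaledAveragedMap T lam h x - x
      = (h * (1 + lam * (1 - h))) • (scaledMap T (lam / (1 + lam * (1 - h))) x - x) := by
  have harg : (1 - lam / (1 + lam * (1 - h))) / (lam / (1 + lam * (1 - h)))
      = (1 - lam * h) / lam := by
    field_simp; ring
  rw [scaledMap, harg, scaledAveragedMap, averagedMap]
  match_scalars <;> field_simp; ring

theorem norm_scaledAveragedMap_sub_le {kf lf : ℝ → ℝ} (hH : AssumptionH T kf lf)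
    (hk0 : ∀ x ∈ Ioc (0 : ℝ) 1, 0 ≤ kf x) (hkmono : MonotoneOn kf (Ioc (0 : ℝ) 1))
    (hl0 : ∀ x : ℝ, 0 ≤ x → 0 ≤ lf x) (hlmono : MonotoneOn lf (Ici (0 : ℝ)))
    (hlam : lam ∈ Ioc (0 : ℝ) 1) (hh : h ∈ Ioc (0 : ℝ) 1) {w : E} (hw : scaledMap T lam w = w)
    {r : ℝ} (hwr : ‖w‖ ≤ r) :
    ‖scaledAveragedMap T lam h w - w‖ ≤ lam * h * (2 * lf r * kf (lam ^ 2) / lam) := by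
  obtain ⟨hlam0, hlam1⟩ := hlam
  obtain ⟨hh0, hh1⟩ := hh
  set d := 1 + lam * (1 - h)
  have hd1 : 1 ≤ d := by nlinarith
  have hd2 : d ≤ 2 := by nlinarith
  set mu := lam / d
  have hsq : lam ^ 2 ∈ Ioc (0 : ℝ) 1 := ⟨by positivity, pow_le_one₀ hlam0.le hlam1⟩
  have hlr : 0 ≤ lf r := hl0 r ((norm_nonneg w).trans hwr)
  have hmu : ‖scaledMap T mu w - w‖ ≤ kf (lam ^ 2) * lf r := by
    rcases hh1.eq_or_lt with rfl | hh1
    · simp [mu, d, hw, mul_nonneg (hk0 _ hsq) hlr]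
    have hgap : lam - mu = lam ^ 2 * (1 - h) / d := by
      simp only [mu]; field_simp; ring
    have hgap0 : 0 < lam - mu := by rw [hgap]; have := sub_pos.2 hh1; positivity
    have hgap1 : lam - mu ≤ lam ^ 2 := by
      rw [hgap, div_le_iff₀ (by linarith)]; nlinarith [sq_nonneg lam]
    have hmu_mem : mu ∈ Ioc (0 : ℝ) 1 :=
      ⟨div_pos hlam0 (by linarith), (div_le_self hlam0.le hd1).trans hlam1⟩
    calc ‖scaledMap T mu w - w‖ = ‖scaledMap T lam w - scaledMap T mu w‖ := by
          rw [hw, norm_sub_rev]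
      _ ≤ kf |lam - mu| * lf ‖w‖ := hH lam mu ⟨hlam0, hlam1⟩ hmu_mem w
      _ ≤ kf (lam ^ 2) * lf r := by
          rw [abs_of_pos hgap0]
          have hgap_mem : lam - mu ∈ Ioc (0 : ℝ) 1 := ⟨hgap0, hgap1.trans hsq.2⟩
          exact mul_le_mul (hkmono hgap_mem hsq hgap1)
            (hlmono (norm_nonneg w) ((norm_nonneg w).trans hwr) hwr)
            (hl0 _ (norm_nonneg w)) (hk0 _ hsq)
  rw [scaledAveragedMap_sub_self hlam0.ne' (by linarith), norm_smul,
    Real.norm_of_nonneg (by positivity)]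
  calc h * d * ‖scaledMap T mu w - w‖ ≤ h * d * (kf (lam ^ 2) * lf r) := by gcongr
    _ ≤ h * 2 * (kf (lam ^ 2) * lf r) := by gcongr; exact mul_nonneg (hk0 _ hsq) hlr
    _ = lam * h * (2 * lf r * kf (lam ^ 2) / lam) := by field_simp

end

theorem assumption_H_composition_general
    {Z : Type*} [NormedAddCommGroup Z] [NormedSpace ℝ Z]
    (T : Z → Z) (hT : ∀ x y : Z, ‖T x - T y‖ ≤ ‖x - y‖)
    (kf lf : ℝ → ℝ)
    (hk0 : ∀ x ∈ Set.Ioc (0 : ℝ) 1, 0 ≤ kf x)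
    (hkmono : MonotoneOn kf (Set.Ioc (0 : ℝ) 1))
    (hl0 : ∀ x : ℝ, 0 ≤ x → 0 ≤ lf x)
    (hlmono : MonotoneOn lf (Set.Ici (0 : ℝ)))
    (hksmall : Filter.Tendsto (fun x : ℝ => kf x / Real.sqrt x)
      (nhdsWithin 0 (Set.Ioi 0)) (nhds 0))
    (hH : ∀ lam mu : ℝ, lam ∈ Set.Ioc (0 : ℝ) 1 → mu ∈ Set.Ioc (0 : ℝ) 1 →
      ∀ x : Z, ‖lam • T (((1 - lam) / lam) • x) - mu • T (((1 - mu) / mu) • x)‖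
        ≤ kf |lam - mu| * lf ‖x‖)
    (lam : ℝ) (hlam : lam ∈ Set.Ioc (0 : ℝ) 1)
    (hs : List ℝ) (hmem : ∀ hi ∈ hs, hi ∈ Set.Ioc (0 : ℝ) 1)
    (Wl : Z) (hWl : T ((1 - lam) • Wl) = Wl) :
    ‖hs.foldr (fun hi x => lam • ((1 - hi) • (((1 - lam * hi) / lam) • x)
        + hi • T (((1 - lam * hi) / lam) • x))) (lam • Wl)
      - lam • Wl‖ ≤ 2 * lf ‖T 0‖ * kf (lam ^ 2) / lam ∧
    Filter.Tendsto (fun l : ℝ => 2 * lf ‖T 0‖ * kf (l ^ 2) / l)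
      (nhdsWithin 0 (Set.Ioi 0)) (nhds 0) := by
  refine ⟨?_, tendsto_const_mul_comp_sq_div hksmall _⟩
  obtain ⟨hlam0, hlam1⟩ := hlam
  have hw := norm_smul_le_of_map_smul_eq hT hlam0.le hlam1 hWl
  have hC : 0 ≤ 2 * lf ‖T 0‖ * kf (lam ^ 2) / lam :=
    div_nonneg (mul_nonneg (mul_nonneg zero_le_two (hl0 _ (norm_nonneg _)))
      (hk0 _ ⟨by positivity, pow_le_one₀ hlam0.le hlam1⟩)) hlam0.le
  rw [← dist_eq_norm, ← mem_closedBall]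
  refine List.foldr_mem_of_mapsTo (f := scaledAveragedMap T lam) (fun h hh => ?_)
    (mem_closedBall_self hC)
  obtain ⟨hh0, hh1⟩ := hmem h hh
  refine mapsTo_closedBall_of_dist_le (a := lam * h) (by nlinarith) ?_ ?_
  · exact dist_scaledAveragedMap_le hT hlam0 hlam1 hh0.le hh1
  · rw [dist_eq_norm]
    exact norm_scaledAveragedMap_sub_le hH hk0 hkmono hl0 hlmono ⟨hlam0, hlam1⟩ ⟨hh0, hh1⟩
      (scaledMap_smul_eq hlam0.ne' hWl) hw

/-- Under assumption (H), any finite composition `D_λ^{h_1} ∘ ⋯ ∘ D_λ^{h_n}`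
applied to `w_λ` stays within `2 ℓ(‖T 0‖) k(λ²)/λ` of `w_λ`, and this bound
tends to `0` as `λ → 0⁺`. Here `w_λ = λ • W_λ` with `W_λ` the fixed point of
`x ↦ T((1-λ) x)`, and `D_λ^h(x) = λ • T_h(((1-λh)/λ) • x)` with
`T_h = (1-h) Id + h T`. -/
theorem assumption_H_composition
    {Z : Type*} [NormedAddCommGroup Z] [NormedSpace ℝ Z] [CompleteSpace Z]
    (T : Z → Z) (hT : ∀ x y : Z, ‖T x - T y‖ ≤ ‖x - y‖)
    (kf lf : ℝ → ℝ)
    (hk0 : ∀ x ∈ Set.Ioc (0 : ℝ) 1, 0 ≤ kf x)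
    (hkmono : MonotoneOn kf (Set.Ioc (0 : ℝ) 1))
    (hl0 : ∀ x : ℝ, 0 ≤ x → 0 ≤ lf x)
    (hlmono : MonotoneOn lf (Set.Ici (0 : ℝ)))
    (hksmall : Filter.Tendsto (fun x : ℝ => kf x / Real.sqrt x)
      (nhdsWithin 0 (Set.Ioi 0)) (nhds 0))
    (hH : ∀ lam mu : ℝ, lam ∈ Set.Ioc (0 : ℝ) 1 → mu ∈ Set.Ioc (0 : ℝ) 1 →
      ∀ x : Z, ‖lam • T (((1 - lam) / lam) • x) - mu • T (((1 - mu) / mu) • x)‖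
        ≤ kf |lam - mu| * lf ‖x‖)
    (lam : ℝ) (hlam : lam ∈ Set.Ioc (0 : ℝ) 1)
    (hs : List ℝ) (hmem : ∀ hi ∈ hs, hi ∈ Set.Ioc (0 : ℝ) 1)
    (Wl : Z) (hWl : T ((1 - lam) • Wl) = Wl) :
    ‖hs.foldr (fun hi x => lam • ((1 - hi) • (((1 - lam * hi) / lam) • x)
        + hi • T (((1 - lam * hi) / lam) • x))) (lam • Wl)
      - lam • Wl‖ ≤ 2 * lf ‖T 0‖ * kf (lam ^ 2) / lam ∧
    Filter.Tendsto (fun l : ℝ => 2 * lf ‖T 0‖ * kf (l ^ 2) / l)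
      (nhdsWithin 0 (Set.Ioi 0)) (nhds 0) :=
  assumption_H_composition_general T hT kf lf hk0 hkmono hl0 hlmono hksmall hH lam hlam hs hmem Wl
    hWl
end
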